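/- arXiv:2101.07000 — 2 statements merged into one kernel-verified Lean document; each statement's English description precedes it below -/
import Mathlib

section
/- Let (T,σ) with root ρ be the least resolved tree of a 2-BMG (G,σ). Then each child of ρ is either one of the support leaves S_ρ of ρ, or the root of the least resolved tree of a connected component of the induced subgraph (G − S_ρ, σ|.). -/
/-- A (finite) rooted tree on vertex type `V`, encoded by its ancestor relation:
`anc u v` means that `u` is an ancestor of `v`, i.e. `u` lies on the path from
the root to `v` (in particular the relation is reflexive, `v ⪯_T u ↔ anc u v`). -/
structure RTree (V : Type) where
  anc : V → V → Prop
  refl : ∀ v, anc v v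
  antisymm : ∀ u v, anc u v → anc v u → u = v
  trans : ∀ u v w, anc u v → anc v w → anc u w
  root : V
  root_anc : ∀ v, anc root v
  chain : ∀ u v w, anc u w → anc v w → anc u v ∨ anc v u

namespace RTree

variable {V C : Type}

/-- a leaf: a vertex without proper descendants. -/
def IsLeaf (T : RTree V) (v : V) : Prop := ∀ w, T.anc v w → w = v

/-- `v` is a child of `u`: `v ≺_T u` with no vertex strictly in between. -/
def IsChild (T : RTree V) (v u : V) : Prop :=
  T.anc u v ∧ u ≠ v ∧ ∀ w, T.anc u w → T.anc w v → w = u ∨ w = v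

/-- phylogenetic: every inner vertex has at least two children. -/
def Phylo (T : RTree V) : Prop :=
  ∀ u, ¬ T.IsLeaf u → ∃ v w, v ≠ w ∧ T.IsChild v u ∧ T.IsChild w u

/-- the leaf set `L(T)`. -/
def leaves (T : RTree V) : Set V := {x | T.IsLeaf x}

/-- `y` is a best match of `x` in the leaf-colored tree `(T,σ)`:
both are leaves, `σ x ≠ σ y`, and for every leaf `y'` of the color `σ y` we have
`lca(x,y) ⪯_T lca(x,y')`, i.e. every common ancestor of `x` and `y'` is an
ancestor of `y`.  These are exactly the arcs of the best match graph `G(T,σ)`,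
whose vertex set is the leaf set of `T`. -/
def BestMatch (T : RTree V) (σ : V → C) (x y : V) : Prop :=
  T.IsLeaf x ∧ T.IsLeaf y ∧ σ x ≠ σ y ∧
    ∀ y', T.IsLeaf y' → σ y' = σ y →
      ∀ u, T.anc u x → T.anc u y' → T.anc u y

/-- the subtree `T(v)` of `T` rooted at `v`. -/
def subtree (T : RTree V) (v : V) : RTree {w : V // T.anc v w} where
  anc a b := T.anc a.1 b.1
  refl a := T.refl a.1
  antisymm a b h1 h2 := Subtype.ext (T.antisymm _ _ h1 h2)
  trans a b c h1 h2 := T.trans _ _ _ h1 h2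
  root := ⟨v, T.refl v⟩
  root_anc a := a.2
  chain a b c h1 h2 := T.chain _ _ _ h1 h2

/-- contraction of the tree edge between the non-root vertex `v` and its
parent: the vertex `v` is identified with its parent, i.e. deleted. -/
def contract (T : RTree V) (v : V) (hv : v ≠ T.root) : RTree {w : V // w ≠ v} where
  anc a b := T.anc a.1 b.1
  refl a := T.refl a.1
  antisymm a b h1 h2 := Subtype.ext (T.antisymm _ _ h1 h2)
  trans a b c h1 h2 := T.trans _ _ _ h1 h2
  root := ⟨T.root, Ne.symm hv⟩
  root_anc a := T.root_anc a.1
  chain a b c h1 h2 := T.chain _ _ _ h1 h2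

/-- The edge of `T` between `v` and its parent is redundant with respect to
`G(T,σ)`: contracting it yields a tree that still explains `G(T,σ)`, i.e. the
contracted tree has the same leaf set and induces the same best-match arcs.
(Edges of a rooted tree are identified with their lower endpoint `v`.) -/
def Redundant (T : RTree V) (σ : V → C) (v : V) : Prop :=
  ∃ hv : v ≠ T.root,
    ¬ T.IsLeaf v ∧
    (∀ w : {w : V // w ≠ v}, T.IsLeaf w.1 ↔ (T.contract v hv).IsLeaf w) ∧
    (∀ x y : {w : V // w ≠ v},
      (T.BestMatch σ x.1 y.1 ↔ (T.contract v hv).BestMatch (fun w => σ w.1) x y))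

/-- `(T,σ)` is the least resolved tree (of the BMG `G(T,σ)`): a phylogenetic
tree none of whose edges is redundant. -/
def LeastResolved (T : RTree V) (σ : V → C) : Prop :=
  T.Phylo ∧ ∀ v, ¬ T.Redundant σ v

/-- the support leaves `S_u = child_T(u) ∩ L(T)` of a vertex `u`. -/
def SupportLeaves (T : RTree V) (u : V) : Set V :=
  {v | T.IsChild v u ∧ T.IsLeaf v}

/-- the set of colors `σ(L(T(v)))` occurring on leaves of the subtree `T(v)`. -/
def subColors (T : RTree V) (σ : V → C) (v : V) : Set C :=
  σ '' {x | T.IsLeaf x ∧ T.anc v x}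

/-- the set of colors `σ(L(T))` of the leaves of `T`. -/
def leafColors (T : RTree V) (σ : V → C) : Set C := σ '' T.leaves

/-- the leaf coloring uses exactly two colors, i.e. `G(T,σ)` is a 2-BMG. -/
def TwoColored (T : RTree V) (σ : V → C) : Prop :=
  ∃ c₁ c₂ : C, c₁ ≠ c₂ ∧ T.leafColors σ = {c₁, c₂}

end RTree

/-- the digraph with arc relation `A`, restricted to the vertex set `S`, is
connected: between any two vertices of `S` there is a path inside `S` in the
underlying undirected graph. -/
def ConnectedOn {β : Type} (A : β → β → Prop) (S : Set β) : Prop :=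
  S.Nonempty ∧ ∀ x ∈ S, ∀ y ∈ S,
    Relation.ReflTransGen (fun a b => a ∈ S ∧ b ∈ S ∧ (A a b ∨ A b a)) x y

/-- `K` is a connected component of the digraph induced by the arc relation `A`
on the vertex set `S`: a maximal connected subset of `S`. -/
def IsComponent {β : Type} (A : β → β → Prop) (S : Set β) (K : Set β) : Prop :=
  K ⊆ S ∧ ConnectedOn A K ∧
    ∀ K', K ⊆ K' → K' ⊆ S → ConnectedOn A K' → K' = K

namespace RTree

/-- the best match graph `G(T,σ)` (on the leaf set of `T`) is connected. -/
def BMGConnected {V C : Type} (T : RTree V) (σ : V → C) : Prop :=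
  ConnectedOn (T.BestMatch σ) T.leaves

/-- the umbrella vertices `U(G,σ)` of the BMG `G(T,σ)`: leaves having an
out-arc to every differently colored leaf. -/
def Umbrella {V C : Type} (T : RTree V) (σ : V → C) : Set V :=
  {x | T.IsLeaf x ∧ ∀ y, T.IsLeaf y → σ y ≠ σ x → T.BestMatch σ x y}

/-- `S` is closed under in-neighbours in `G(T,σ)`: `x ∈ S → N⁻(x) ⊆ S`. -/
def InClosed {V C : Type} (T : RTree V) (σ : V → C) (S : Set V) : Prop :=
  ∀ x ∈ S, ∀ y, T.BestMatch σ y x → y ∈ S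

/-- `S` is a support set of `G(T,σ)`: a maximal subset of the umbrella
vertices that is closed under in-neighbours. -/
def IsSupportSet {V C : Type} (T : RTree V) (σ : V → C) (S : Set V) : Prop :=
  S ⊆ T.Umbrella σ ∧ T.InClosed σ S ∧
    ∀ S', S ⊆ S' → S' ⊆ T.Umbrella σ → T.InClosed σ S' → S' = S

end RTree

/-! Let `v` be an inner child of the root `ρ`. As the edge `ρv` is not redundant, there are leaves
`x, y'` below `v` and a leaf `y` outside `T(v)` with `σ y = σ y'` such that `y` becomes a best match
of `x` once `v` is contracted. Then every common ancestor of `x` and a leaf of color `σ y` lies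
above `v`, so `x` best-matches every leaf of color `σ y` below `v`, while every other leaf below
`v` has a best match of color `σ y` below `v`: the leaves of `T(v)` form a connected subgraph.
The same argument shows that below every inner child of `ρ` both colors occur, so that all best
matches of a leaf below such a child stay below it; hence no arc of `G − S_ρ` leaves `L(T(v))`.
Finally best matches between leaves of `T(v)` do not depend on the rest of `T`, which makes
`T(v)` least resolved. -/

theorem ConnectedOn.of_reflTransGen {β : Type} {A : β → β → Prop} {S : Set β} {x : β}
    (hx : x ∈ S)
    (h : ∀ p ∈ S, Relation.ReflTransGen (fun a b => a ∈ S ∧ b ∈ S ∧ (A a b ∨ A b a)) p x) :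
    ConnectedOn A S :=
  ⟨⟨x, hx⟩, fun p hp q hq => (h p hp).trans <|
    Relation.ReflTransGen.mono (fun _ _ ⟨ha, hb, hab⟩ => ⟨hb, ha, hab.symm⟩) _ _
      (Relation.reflTransGen_swap.mpr (h q hq))⟩

theorem IsComponent.of_closed {β : Type} {A : β → β → Prop} {S K : Set β} (hKS : K ⊆ S)
    (hK : ConnectedOn A K) (hclosed : ∀ a ∈ S, ∀ c ∈ K, A a c ∨ A c a → a ∈ K) :
    IsComponent A S K := by
  refine ⟨hKS, hK, fun K' hKK' hK'S hK' => Set.Subset.antisymm (fun z hz => ?_) hKK'⟩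
  obtain ⟨x, hx⟩ := hK.1
  have hzx := hK'.2 z hz x (hKK' hx)
  clear hz
  induction hzx using Relation.ReflTransGen.head_induction_on with
  | refl => exact hx
  | head step _ ih => exact hclosed _ (hK'S step.1) _ ih step.2.2

theorem wellFounded_and_ne_of_antisymm {α : Type} [Finite α] {r : α → α → Prop}
    (antisymm : ∀ a b, r a b → r b a → a = b) (trans : ∀ a b c, r a b → r b c → r a c) :
    WellFounded fun a b => r a b ∧ a ≠ b :=
  haveI : IsTrans α fun a b => r a b ∧ a ≠ b :=
    ⟨fun a b c ⟨hab, hne⟩ ⟨hbc, _⟩ => ⟨trans a b c hab hbc,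
      fun hac => hne (antisymm a b hab (hac ▸ hbc))⟩⟩
  haveI : Std.Irrefl fun a b => r a b ∧ a ≠ b := ⟨fun _ h => h.2 rfl⟩
  Finite.wellFounded_of_trans_of_irrefl _

namespace RTree

variable {V C : Type}

def leavesBelow (T : RTree V) (v : V) : Set V := {x | T.IsLeaf x ∧ T.anc v x}

/-- `y` is a best match of `x` in the tree obtained from `T` by contracting the edge above `v`,
where `v` is no longer available as a common ancestor. -/
def BestMatchContract (T : RTree V) (σ : V → C) (v x y : V) : Prop :=
  T.IsLeaf x ∧ T.IsLeaf y ∧ σ x ≠ σ y ∧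
    ∀ y', T.IsLeaf y' → σ y' = σ y → ∀ u, u ≠ v → T.anc u x → T.anc u y' → T.anc u y

variable (T : RTree V) {σ : V → C}

theorem eq_of_isChild_root {a b w : V} (ha : T.IsChild a T.root) (hb : T.IsChild b T.root)
    (haw : T.anc a w) (hbw : T.anc b w) : a = b := by
  have key : ∀ {a b}, T.IsChild a T.root → T.IsChild b T.root → T.anc a b → a = b :=
    fun ha hb hab => (hb.2.2 _ (T.root_anc _) hab).resolve_left (Ne.symm ha.2.1)
  rcases T.chain a b w haw hbw with hab | hba
  · exact key ha hb hab
  · exact (key hb ha hba).symm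

theorem exists_isChild_anc [Finite V] {a b : V} (hab : T.anc a b) (hne : a ≠ b) :
    ∃ c, T.IsChild c a ∧ T.anc c b := by
  obtain ⟨m, ⟨ham, hmb, hma⟩, hmin⟩ :=
    (wellFounded_and_ne_of_antisymm T.antisymm T.trans).has_min
      {w | T.anc a w ∧ T.anc w b ∧ w ≠ a} ⟨b, hab, T.refl b, hne.symm⟩
  refine ⟨m, ⟨ham, hma.symm, fun w haw hwm => ?_⟩, hmb⟩
  by_contra! hw
  exact hmin w ⟨haw, T.trans _ _ _ hwm hmb, hw.1⟩ ⟨hwm, hw.2⟩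

/-- The best match `z` is taken at the lowest ancestor of `x` above a leaf of color `σ y`. -/
theorem exists_bestMatch [Finite V] {x y : V} (hx : T.IsLeaf x) (hy : T.IsLeaf y)
    (hxy : σ x ≠ σ y) :
    ∃ z, T.BestMatch σ x z ∧ σ z = σ y ∧ ∀ w, T.anc w x → T.anc w y → T.anc w z := by
  set S := {w | T.anc w x ∧ ∃ z, T.IsLeaf z ∧ σ z = σ y ∧ T.anc w z}
  obtain ⟨m, ⟨hmx, z, hz, hzy, hmz⟩, hmin⟩ :=
    (wellFounded_and_ne_of_antisymm (r := fun a b => T.anc b a)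
      (fun a b h h' => T.antisymm a b h' h) (fun a b c h h' => T.trans c b a h' h)).has_min S
      ⟨T.root, T.root_anc x, y, hy, rfl, T.root_anc y⟩
  have below : ∀ w ∈ S, T.anc w z := by
    intro w hw
    refine T.trans _ _ _ ?_ hmz
    rcases T.chain w m x hw.1 hmx with hwm | hmw
    · exact hwm
    · by_contra hwm
      exact hmin w hw ⟨hmw, fun h => hwm (h ▸ T.refl w)⟩
  exact ⟨z, ⟨hx, hz, hzy ▸ hxy, fun y₂ hy₂ hc w hwx hwy₂ =>
      below w ⟨hwx, y₂, hy₂, hc.trans hzy, hwy₂⟩⟩,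
    hzy, fun w hwx hwy => below w ⟨hwx, y, hy, rfl, hwy⟩⟩

theorem subtree_isLeaf_iff {v : V} (w : {w : V // T.anc v w}) :
    (T.subtree v).IsLeaf w ↔ T.IsLeaf w.1 :=
  ⟨fun h z hz => congrArg Subtype.val (h ⟨z, T.trans _ _ _ w.2 hz⟩ hz),
    fun h z hz => Subtype.ext (h z.1 hz)⟩

theorem subtree_isChild_iff {v : V} (a u : {w : V // T.anc v w}) :
    (T.subtree v).IsChild a u ↔ T.IsChild a.1 u.1 := by
  refine ⟨fun ⟨hua, hne, hbetween⟩ => ⟨hua, fun h => hne (Subtype.ext h), fun w huw hwa => ?_⟩,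
    fun ⟨hua, hne, hbetween⟩ => ⟨hua, fun h => hne (congrArg Subtype.val h), fun w huw hwa => ?_⟩⟩
  · simpa only [Subtype.ext_iff] using hbetween ⟨w, T.trans _ _ _ u.2 huw⟩ huw hwa
  · simpa only [Subtype.ext_iff] using hbetween w.1 huw hwa

/-- A common ancestor of `a` and a leaf outside `T(v)` lies above `v`, hence above `b`. -/
theorem subtree_bestMatch_iff {v : V} (a b : {w : V // T.anc v w}) :
    (T.subtree v).BestMatch (fun w => σ w.1) a b ↔ T.BestMatch σ a.1 b.1 := by
  simp only [BestMatch, subtree_isLeaf_iff]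
  refine and_congr_right fun _ => and_congr_right fun _ => and_congr_right fun _ =>
    ⟨fun h y' hy' hc u hua huy' => ?_, fun h y' hy' hc u hua huy' => h y'.1 hy' hc u.1 hua huy'⟩
  rcases T.chain u v a.1 hua a.2 with huv | hvu
  · exact T.trans _ _ _ huv b.2
  · exact h ⟨y', T.trans _ _ _ hvu huy'⟩ hy' hc ⟨u, hvu⟩ hua huy'

theorem Phylo.subtree {T : RTree V} (hT : T.Phylo) (v : V) : (T.subtree v).Phylo := by
  intro u hu
  obtain ⟨a, b, hab, ha, hb⟩ := hT u.1 fun h => hu ((T.subtree_isLeaf_iff u).mpr h)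
  exact ⟨⟨a, T.trans _ _ _ u.2 ha.1⟩, ⟨b, T.trans _ _ _ u.2 hb.1⟩,
    fun h => hab (congrArg Subtype.val h),
    (T.subtree_isChild_iff _ u).mpr ha, (T.subtree_isChild_iff _ u).mpr hb⟩

theorem contract_isLeaf_iff {v : V} (hv : v ≠ T.root) (hvl : ¬ T.IsLeaf v)
    (w : {w : V // w ≠ v}) :
    T.IsLeaf w.1 ↔ (T.contract v hv).IsLeaf w := by
  refine ⟨fun h z hz => Subtype.ext (h z.1 hz), fun h z hz => ?_⟩
  by_cases hzv : z = v
  · subst hzv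
    obtain ⟨u, hzu, huz⟩ : ∃ u, T.anc z u ∧ u ≠ z := by
      by_contra! hc
      exact hvl hc
    have huw : u = w.1 := congrArg Subtype.val (h ⟨u, huz⟩ (T.trans _ _ _ hz hzu))
    exact absurd (T.antisymm _ _ hz (huw ▸ hzu)) w.2
  · exact congrArg Subtype.val (h ⟨z, hzv⟩ hz)

theorem contract_bestMatch_iff {v : V} (hv : v ≠ T.root) (hvl : ¬ T.IsLeaf v)
    (x y : {w : V // w ≠ v}) :
    (T.contract v hv).BestMatch (fun w => σ w.1) x y ↔ T.BestMatchContract σ v x.1 y.1 := by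
  simp only [BestMatch, BestMatchContract, ← T.contract_isLeaf_iff hv hvl]
  refine and_congr_right fun _ => and_congr_right fun _ => and_congr_right fun _ =>
    ⟨fun h y' hy' hc u huv hux huy' => ?_,
      fun h y' hy' hc u hux huy' => h y'.1 hy' hc u.1 u.2 hux huy'⟩
  have hy'v : y' ≠ v := fun h => hvl (h ▸ hy')
  exact h ⟨y', hy'v⟩ hy' hc ⟨u, huv⟩ hux huy'

theorem bestMatch_iff_bestMatchContract {v x y : V} :
    T.BestMatch σ x y ↔ T.BestMatchContract σ v x y ∧
      ∀ y', T.IsLeaf y' → σ y' = σ y → T.anc v x → T.anc v y' → T.anc v y := by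
  refine ⟨fun ⟨hx, hy, hne, h⟩ => ⟨⟨hx, hy, hne, fun y' hy' hc u _ => h y' hy' hc u⟩,
      fun y' hy' hc => h y' hy' hc v⟩,
    fun ⟨⟨hx, hy, hne, h⟩, hv⟩ => ⟨hx, hy, hne, fun y' hy' hc u => ?_⟩⟩
  by_cases huv : u = v
  · exact huv ▸ hv y' hy' hc
  · exact h y' hy' hc u huv

/-- Contracting an edge never removes a best match. -/
theorem redundant_iff {v : V} (hv : v ≠ T.root) (hvl : ¬ T.IsLeaf v) :
    T.Redundant σ v ↔ ∀ x y, T.BestMatchContract σ v x y → T.BestMatch σ x y := by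
  constructor
  · rintro ⟨_, _, _, hbm⟩ x y hxy
    have hne : ∀ {z}, T.IsLeaf z → z ≠ v := fun hz h => hvl (h ▸ hz)
    exact (hbm ⟨x, hne hxy.1⟩ ⟨y, hne hxy.2.1⟩).mpr
      ((T.contract_bestMatch_iff hv hvl _ _).mpr hxy)
  · intro h
    refine ⟨hv, hvl, T.contract_isLeaf_iff hv hvl, fun x y => ?_⟩
    rw [T.contract_bestMatch_iff hv hvl]
    exact ⟨fun hxy => (T.bestMatch_iff_bestMatchContract.mp hxy).1, h x y⟩

theorem exists_of_not_redundant {v : V} (hv : v ≠ T.root) (hvl : ¬ T.IsLeaf v)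
    (hnr : ¬ T.Redundant σ v) :
    ∃ x y y', T.BestMatchContract σ v x y ∧ T.IsLeaf y' ∧ σ y' = σ y ∧
      T.anc v x ∧ T.anc v y' ∧ ¬ T.anc v y := by
  simp only [T.redundant_iff hv hvl, T.bestMatch_iff_bestMatchContract (v := v)] at hnr
  push Not at hnr
  obtain ⟨x, y, hxy, hwitness⟩ := hnr
  obtain ⟨y', hy', hc, hvx, hvy', hvy⟩ := hwitness hxy
  exact ⟨x, y, y', hxy, hy', hc, hvx, hvy', hvy⟩

theorem subtree_leastResolved (hT : T.LeastResolved σ) (v : V) :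
    (T.subtree v).LeastResolved (fun w => σ w.1) := by
  refine ⟨hT.1.subtree v, fun u hred => hT.2 u.1 ?_⟩
  have hur : u ≠ (T.subtree v).root := hred.1
  have hul : ¬ T.IsLeaf u.1 := fun h => hred.2.1 ((T.subtree_isLeaf_iff u).mpr h)
  have hvu : v ≠ u.1 := fun h => hur (Subtype.ext h.symm)
  have huρ : u.1 ≠ T.root := fun h => hvu (T.antisymm _ _ u.2 (h ▸ T.root_anc v))
  rw [T.redundant_iff huρ hul]
  rw [(T.subtree v).redundant_iff hur fun h => hul ((T.subtree_isLeaf_iff u).mp h)] at hred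
  intro x y hxy
  refine T.bestMatch_iff_bestMatchContract.mpr ⟨hxy, fun y' hy' hc hux huy' => ?_⟩
  have hvx : T.anc v x := T.trans _ _ _ u.2 hux
  by_cases hvy : T.anc v y
  · have hsub : (T.subtree v).BestMatchContract (fun w => σ w.1) u ⟨x, hvx⟩ ⟨y, hvy⟩ := by
      obtain ⟨hx, hy, hne, h⟩ := hxy
      refine ⟨(T.subtree_isLeaf_iff _).mpr hx, (T.subtree_isLeaf_iff _).mpr hy, hne,
        fun y₂ hy₂ hc₂ w hwu hwx hwy₂ => ?_⟩
      exact h y₂.1 ((T.subtree_isLeaf_iff y₂).mp hy₂) hc₂ w.1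
        (fun h => hwu (Subtype.ext h)) hwx hwy₂
    exact ((T.subtree_bestMatch_iff _ _).mp (hred _ _ hsub)).2.2.2 y' hy' hc u.1 hux huy'
  · exact absurd (hxy.2.2.2 y' hy' hc v hvu hvx (T.trans _ _ _ u.2 huy')) hvy

theorem TwoColored.eq_or_eq {T : RTree V} {σ : V → C} (h2 : T.TwoColored σ) {a b z : V}
    (ha : T.IsLeaf a) (hb : T.IsLeaf b) (hz : T.IsLeaf z) (hab : σ a ≠ σ b) :
    σ z = σ a ∨ σ z = σ b := by
  obtain ⟨c₁, c₂, -, hcol⟩ := h2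
  have mem : ∀ {w}, T.IsLeaf w → σ w = c₁ ∨ σ w = c₂ := fun hw => by
    have hw : σ _ ∈ T.leafColors σ := ⟨_, hw, rfl⟩
    rwa [hcol] at hw
  rcases mem ha with h | h <;> rcases mem hb with h' | h' <;> rcases mem hz with h'' | h'' <;>
    grind

theorem exists_mem_leavesBelow_color_eq (h2 : T.TwoColored σ) {v z : V} (hv : v ≠ T.root)
    (hvl : ¬ T.IsLeaf v) (hnr : ¬ T.Redundant σ v) (hz : T.IsLeaf z) :
    ∃ z' ∈ T.leavesBelow v, σ z' = σ z := by
  obtain ⟨x, y, y', hxy, hy', hc, hvx, hvy', -⟩ := T.exists_of_not_redundant hv hvl hnr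
  rcases h2.eq_or_eq hxy.1 hy' hz (hc ▸ hxy.2.2.1) with hzx | hzy'
  · exact ⟨x, ⟨hxy.1, hvx⟩, hzx.symm⟩
  · exact ⟨y', ⟨hy', hvy'⟩, hzy'.symm⟩

theorem anc_of_bestMatch_of_not_redundant (h2 : T.TwoColored σ) {v a c : V}
    (hv : v ≠ T.root) (hvl : ¬ T.IsLeaf v) (hnr : ¬ T.Redundant σ v) (hva : T.anc v a)
    (hac : T.BestMatch σ a c) : T.anc v c := by
  obtain ⟨z, ⟨hz, hvz⟩, hzc⟩ := T.exists_mem_leavesBelow_color_eq h2 hv hvl hnr hac.2.1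
  exact hac.2.2.2 z hz hzc v hva hvz

theorem connectedOn_leavesBelow [Finite V] (h2 : T.TwoColored σ) {v : V} (hv : v ≠ T.root)
    (hvl : ¬ T.IsLeaf v) (hnr : ¬ T.Redundant σ v) :
    ConnectedOn (T.BestMatch σ) (T.leavesBelow v) := by
  obtain ⟨x, y, y', hxy, hy', hc, hvx, hvy', hvy⟩ := T.exists_of_not_redundant hv hvl hnr
  obtain ⟨hx, hy, hxy_ne, hxy_best⟩ := hxy
  have above : ∀ y₂, T.IsLeaf y₂ → σ y₂ = σ y → ∀ w, T.anc w x → T.anc w y₂ → T.anc w v := by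
    intro y₂ hy₂ hc₂ w hwx hwy₂
    rcases T.chain w v x hwx hvx with hwv | hvw
    · exact hwv
    · by_contra hwv
      exact hvy (T.trans _ _ _ hvw
        (hxy_best y₂ hy₂ hc₂ w (fun h => hwv (h ▸ T.refl v)) hwx hwy₂))
  have to_x : ∀ z ∈ T.leavesBelow v, σ z = σ y → T.BestMatch σ x z := fun z hz hzy =>
    ⟨hx, hz.1, hzy ▸ hxy_ne, fun y₂ hy₂ hc₂ w hwx hwy₂ =>
      T.trans _ _ _ (above y₂ hy₂ (hc₂.trans hzy) w hwx hwy₂) hz.2⟩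
  refine ConnectedOn.of_reflTransGen ⟨hx, hvx⟩ fun p hp => ?_
  rcases h2.eq_or_eq hx hy hp.1 hxy_ne with hpx | hpy
  · obtain ⟨z, hpz, hzy', hz⟩ :=
      T.exists_bestMatch (σ := σ) hp.1 hy' (by rw [hpx, hc]; exact hxy_ne)
    have hz : z ∈ T.leavesBelow v := ⟨hpz.2.1, hz v hp.2 hvy'⟩
    exact .head ⟨hp, hz, .inl hpz⟩ (.single ⟨hz, ⟨hx, hvx⟩, .inr (to_x z hz (hzy'.trans hc))⟩)
  · exact .single ⟨hp, ⟨hx, hvx⟩, .inr (to_x p hp hpy)⟩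

theorem mem_leavesBelow_of_bestMatch [Finite V] (hnr : ∀ u, ¬ T.Redundant σ u)
    (h2 : T.TwoColored σ) {v a c : V} (hv : T.IsChild v T.root) (hvl : ¬ T.IsLeaf v)
    (ha : a ∈ T.leaves \ T.SupportLeaves T.root) (hc : c ∈ T.leavesBelow v)
    (hac : T.BestMatch σ a c ∨ T.BestMatch σ c a) : a ∈ T.leavesBelow v := by
  refine ⟨ha.1, ?_⟩
  rcases hac with hac | hca
  · by_contra hva
    have haρ : T.root ≠ a := fun h => hva (by rw [ha.1 v (h ▸ T.root_anc v)]; exact T.refl a)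
    obtain ⟨u, hu, hua⟩ := T.exists_isChild_anc (T.root_anc a) haρ
    have hul : ¬ T.IsLeaf u := fun hul => ha.2 (hul a hua ▸ ⟨hu, hul⟩)
    have huc := T.anc_of_bestMatch_of_not_redundant h2 hu.2.1.symm hul (hnr u) hua hac
    exact hva (T.eq_of_isChild_root hu hv huc hc.2 ▸ hua)
  · exact T.anc_of_bestMatch_of_not_redundant h2 hv.2.1.symm hvl (hnr v) hc.2 hca

theorem leavesBelow_subset_of_isChild_root {v : V} (hv : T.IsChild v T.root)
    (hvl : ¬ T.IsLeaf v) : T.leavesBelow v ⊆ T.leaves \ T.SupportLeaves T.root :=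
  fun z ⟨hz, hvz⟩ => ⟨hz, fun ⟨hzρ, _⟩ => hvl (T.eq_of_isChild_root hv hzρ hvz (T.refl z) ▸ hz)⟩

end RTree

/-- Let `(T,σ)` with root `ρ` be the LRT of a 2-BMG `(G,σ)`.
Each child of `ρ` is either one of the support leaves `S_ρ`, or the root of the
least resolved tree for a connected component of `(G − S_ρ, σ|.)`: i.e. the
subtree `T(v)` is least resolved, its leaf set is a connected component of
`G − S_ρ` and its best-match arcs agree with those of `G`. -/
theorem child_of_root_dichotomy {V C : Type} [Fintype V]
    (T : RTree V) (σ : V → C) (hLRT : T.LeastResolved σ)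
    (h2 : T.TwoColored σ) :
    ∀ v, T.IsChild v T.root →
      v ∈ T.SupportLeaves T.root ∨
        (IsComponent (T.BestMatch σ) (T.leaves \ T.SupportLeaves T.root)
            {x | T.IsLeaf x ∧ T.anc v x} ∧
          (T.subtree v).LeastResolved (fun w => σ w.1) ∧
          ∀ a b : {w : V // T.anc v w},
            ((T.subtree v).BestMatch (fun w => σ w.1) a b ↔
              T.BestMatch σ a.1 b.1)) := by
  intro v hv
  by_cases hvl : T.IsLeaf v
  · exact Or.inl ⟨hv, hvl⟩
  refine Or.inr ⟨?_, T.subtree_leastResolved hLRT v, T.subtree_bestMatch_iff⟩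
  exact IsComponent.of_closed (T.leavesBelow_subset_of_isChild_root hv hvl)
    (T.connectedOn_leavesBelow h2 hv.2.1.symm hvl (hLRT.2 v))
    fun a ha c hc hac => T.mem_leavesBelow_of_bestMatch hLRT.2 h2 hv hvl ha hc hac
end

section
/- Let (G,σ) be a 2-BMG, (T,σ) its least resolved tree with root ρ, and S_ρ the support leaves of ρ. If W := U(G,σ) \ S_ρ is nonempty, then all vertices in U(G,σ) = S_ρ ∪ W (a disjoint union) have the same color. -/
/-
Let `w ∈ U(G,σ) \ S_ρ` and let `v` be the child of the root above `w`; since `w` is not a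
support leaf, `v` is an inner vertex. In a least resolved tree the leaves below an inner
non-root vertex are not monochromatic (otherwise the edge above it would be redundant), so
some leaf below `v` has the color other than `σ w`. As `w` is an umbrella vertex, every leaf of
that color is then a best match of `w` and lies below `v`. If an umbrella vertex `z` had this
other color, the same argument applied to `z` would put every leaf of color `σ w` below `v`
as well, so all leaves would lie below `v`, contradicting that the root has a second child.
-/

namespace RTree

variable {V C : Type}

abbrev toPreorder (T : RTree V) : Preorder V where
  le := T.anc
  le_refl := T.refl
  le_trans := T.trans

theorem exists_isLeaf_anc [Finite V] (T : RTree V) (u : V) : ∃ x, T.IsLeaf x ∧ T.anc u x := by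
  let := T.toPreorder
  obtain ⟨x, hux, hx⟩ := Finite.exists_le_maximal (p := fun _ : V => True) (a := u) trivial
  exact ⟨x, fun w hxw => T.antisymm _ _ (hx.2 trivial hxw) hxw, hux⟩

theorem exists_isChild_root_anc [Finite V] (T : RTree V) {w : V} (hw : w ≠ T.root) :
    ∃ v, T.IsChild v T.root ∧ T.anc v w := by
  let := T.toPreorder
  obtain ⟨v, hvw, hv⟩ := Finite.exists_le_minimal (p := fun u : V => u ≠ T.root) hw
  refine ⟨v, ⟨T.root_anc v, Ne.symm hv.1, fun u _ huv => ?_⟩, hvw⟩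
  by_cases hu : u = T.root
  · exact Or.inl hu
  · exact Or.inr (T.antisymm _ _ huv (hv.2 hu huv))

theorem not_anc_of_isChild {T : RTree V} {u v v' x : V} (hv : T.IsChild v u)
    (hv' : T.IsChild v' u) (hne : v ≠ v') (hvx : T.anc v x) : ¬ T.anc v' x := by
  intro hv'x
  rcases T.chain v v' x hvx hv'x with h | h
  · rcases hv'.2.2 v hv.1 h with h' | h'
    · exact hv.2.1 h'.symm
    · exact hne h'
  · rcases hv.2.2 v' hv'.1 h with h' | h'
    · exact hv'.2.1 h'.symm
    · exact hne h'.symm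

theorem Phylo.exists_isLeaf_not_anc [Finite V] {T : RTree V} (hT : T.Phylo) {u v : V}
    (hv : T.IsChild v u) : ∃ x, T.IsLeaf x ∧ ¬ T.anc v x := by
  have hu : ¬ T.IsLeaf u := fun hu => hv.2.1 (hu v hv.1).symm
  obtain ⟨p, q, hpq, hp, hq⟩ := hT u hu
  obtain ⟨v', hv', hne⟩ : ∃ v', T.IsChild v' u ∧ v ≠ v' := by
    by_cases h : v = p
    · exact ⟨q, hq, h ▸ hpq⟩
    · exact ⟨p, hp, h⟩
  obtain ⟨x, hx, hv'x⟩ := T.exists_isLeaf_anc v'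
  exact ⟨x, hx, not_anc_of_isChild hv' hv hne.symm hv'x⟩

theorem isLeaf_contract_iff (T : RTree V) {v : V} (hv : v ≠ T.root) (hvleaf : ¬ T.IsLeaf v)
    (w : {w : V // w ≠ v}) : (T.contract v hv).IsLeaf w ↔ T.IsLeaf w.1 := by
  refine ⟨fun hw u hwu => ?_, fun hw u hwu => Subtype.ext (hw u.1 hwu)⟩
  by_cases huv : u = v
  · subst huv
    obtain ⟨u', huu', hu'u⟩ : ∃ u', T.anc u u' ∧ u' ≠ u := by
      simpa only [IsLeaf, not_forall, exists_prop] using hvleaf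
    have hu'w : u' = w.1 := congrArg Subtype.val (hw ⟨u', hu'u⟩ (T.trans _ _ _ hwu huu'))
    exact absurd (T.antisymm _ _ hwu (hu'w ▸ huu')) w.2
  · exact congrArg Subtype.val (hw ⟨u, huv⟩ hwu)

theorem redundant_of_monochromatic (T : RTree V) (σ : V → C) {v : V} (hv : v ≠ T.root)
    (hvleaf : ¬ T.IsLeaf v) {c : C} (hmono : ∀ y, T.IsLeaf y → T.anc v y → σ y = c) :
    T.Redundant σ v := by
  have hleaf := T.isLeaf_contract_iff hv hvleaf
  refine ⟨hv, hvleaf, fun w => (hleaf w).symm, fun x y => ⟨?_, ?_⟩⟩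
  · rintro ⟨hx, hy, hxy, hbm⟩
    exact ⟨(hleaf x).2 hx, (hleaf y).2 hy, hxy,
      fun y' hy' hc u hux huy' => hbm y'.1 ((hleaf y').1 hy') hc u.1 hux huy'⟩
  · rintro ⟨hx, hy, hxy, hbm⟩
    rw [hleaf] at hx hy
    refine ⟨hx, hy, hxy, fun y' hy' hc u hux huy' => ?_⟩
    by_cases huv : u = v
    · -- the deleted vertex `v` is never the lca of two differently colored leaves
      subst huv
      exact absurd ((hmono x hx hux).trans ((hmono y' hy' huy').symm.trans hc)) hxy
    · exact hbm ⟨y', fun h => hvleaf (h ▸ hy')⟩ ((hleaf _).2 hy') hc ⟨u, huv⟩ hux huy'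

theorem LeastResolved.exists_isLeaf_anc_color_ne {T : RTree V} {σ : V → C}
    (hT : T.LeastResolved σ) {v : V} (hv : v ≠ T.root) (hvleaf : ¬ T.IsLeaf v) (c : C) :
    ∃ y, T.IsLeaf y ∧ T.anc v y ∧ σ y ≠ c := by
  by_contra! hmono
  exact hT.2 v (T.redundant_of_monochromatic σ hv hvleaf hmono)

theorem TwoColored.eq_or_eq_s12 {T : RTree V} {σ : V → C} (h2 : T.TwoColored σ) {x y t : V}
    (hx : T.IsLeaf x) (hy : T.IsLeaf y) (hxy : σ x ≠ σ y) (ht : T.IsLeaf t) :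
    σ t = σ x ∨ σ t = σ y := by
  obtain ⟨c₁, c₂, -, hcol⟩ := h2
  have mem : ∀ s, T.IsLeaf s → σ s = c₁ ∨ σ s = c₂ := fun s hs => by
    have hs' : σ s ∈ T.leafColors σ := Set.mem_image_of_mem σ hs
    simpa only [hcol, Set.mem_insert_iff, Set.mem_singleton_iff] using hs'
  rcases mem x hx with h | h <;> rcases mem y hy with h' | h' <;>
    rcases mem t ht with h'' | h'' <;> simp_all

theorem supportLeaves_root_subset_umbrella (T : RTree V) (σ : V → C) :
    T.SupportLeaves T.root ⊆ T.Umbrella σ := by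
  rintro x ⟨hx, hxleaf⟩
  refine ⟨hxleaf, fun y hy hyx => ⟨hxleaf, hy, Ne.symm hyx, fun y' _ hy'y u hux huy' => ?_⟩⟩
  rcases hx.2.2 u (T.root_anc u) hux with rfl | rfl
  · exact T.root_anc y
  · exact absurd (hxleaf y' huy' ▸ hy'y).symm hyx

theorem anc_of_mem_umbrella {T : RTree V} {σ : V → C} {w v y t : V} (hw : w ∈ T.Umbrella σ)
    (hvw : T.anc v w) (hy : T.IsLeaf y) (hvy : T.anc v y) (hyw : σ y ≠ σ w)
    (ht : T.IsLeaf t) (hty : σ t = σ y) : T.anc v t :=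
  (hw.2 t ht (hty ▸ hyw)).2.2.2 y hy hty.symm v hvw hvy

theorem color_eq_of_mem_umbrella_diff_supportLeaves [Finite V] {T : RTree V} {σ : V → C}
    (hT : T.LeastResolved σ) (h2 : T.TwoColored σ) {w z : V}
    (hw : w ∈ T.Umbrella σ \ T.SupportLeaves T.root) (hz : z ∈ T.Umbrella σ) : σ z = σ w := by
  obtain ⟨hwU, hwS⟩ := hw
  by_contra hzw
  have hwroot : w ≠ T.root := fun h => hzw (congrArg σ (hwU.1 z (h ▸ T.root_anc z)))
  obtain ⟨v, hv, hvw⟩ := T.exists_isChild_root_anc hwroot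
  have hvleaf : ¬ T.IsLeaf v := fun hl => hwS ⟨(hl w hvw).symm ▸ hv, hwU.1⟩
  obtain ⟨y, hy, hvy, hyw⟩ := hT.exists_isLeaf_anc_color_ne hv.2.1.symm hvleaf (σ w)
  have hyz : σ y = σ z := (h2.eq_or_eq_s12 hwU.1 hz.1 (Ne.symm hzw) hy).resolve_left hyw
  have below_z : ∀ t, T.IsLeaf t → σ t = σ z → T.anc v t := fun t ht htz =>
    anc_of_mem_umbrella hwU hvw hy hvy hyw ht (htz.trans hyz.symm)
  have hvz := below_z z hz.1 rfl
  have below_w : ∀ t, T.IsLeaf t → σ t = σ w → T.anc v t := fun t ht htw =>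
    anc_of_mem_umbrella hz hvz hwU.1 hvw (Ne.symm hzw) ht htw
  obtain ⟨x, hx, hvx⟩ := hT.1.exists_isLeaf_not_anc hv
  rcases h2.eq_or_eq_s12 hwU.1 hz.1 (Ne.symm hzw) hx with h | h
  · exact hvx (below_w x hx h)
  · exact hvx (below_z x hx h)

end RTree

/-- Let `(G,σ)` be a 2-BMG, `(T,σ)` its LRT with root `ρ`,
and `S_ρ` the support leaves of `ρ`.  If `W = U(G,σ) \ S_ρ ≠ ∅`, then
`U(G,σ) = S_ρ ∪ W` (a disjoint union) and all vertices of `U(G,σ)` have the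
same color. -/
theorem W_nonempty_same_color {V C : Type} [Fintype V]
    (T : RTree V) (σ : V → C) (hLRT : T.LeastResolved σ)
    (h2 : T.TwoColored σ)
    (hW : (T.Umbrella σ \ T.SupportLeaves T.root).Nonempty) :
    T.Umbrella σ =
        T.SupportLeaves T.root ∪ (T.Umbrella σ \ T.SupportLeaves T.root) ∧
      Disjoint (T.SupportLeaves T.root) (T.Umbrella σ \ T.SupportLeaves T.root) ∧
      ∀ x ∈ T.Umbrella σ, ∀ y ∈ T.Umbrella σ, σ x = σ y := by
  refine ⟨(Set.union_sdiff_cancel (T.supportLeaves_root_subset_umbrella σ)).symm,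
    Set.disjoint_sdiff_right, fun x hx y hy => ?_⟩
  obtain ⟨w, hw⟩ := hW
  rw [RTree.color_eq_of_mem_umbrella_diff_supportLeaves hLRT h2 hw hx,
    RTree.color_eq_of_mem_umbrella_diff_supportLeaves hLRT h2 hw hy]
end
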